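/- Let 𝕜 be ℝ or ℂ, H an n-dimensional inner product space over 𝕜 with orthonormal basis (h₁,…,h_n), 1 ≤ n₁ < ⋯ < n_q < n, and σ = (σ₁,…,σ_q) a general Schubert symbol of type (n₁,…,n_q,n). Then the map p(n₁,…,n_q,H) : V(n₁,…,n_q,H) → G(n₁,…,n_q,H), sending (v₁,…,v_q) to (Im v₁,…,Im v_q), (1) is injective on V_σ(n₁,…,n_q,H), and (2) satisfies p(n₁,…,n_q,H)(V_σ(n₁,…,n_q,H)) ∩ p(n₁,…,n_q,H)(∂V_σ(n₁,…,n_q,H)) = ∅. -/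

import Mathlib

open scoped InnerProductSpace

noncomputable section

/-- `e` is an open cell in `X` with characteristic map `f : Dⁿ → X`:
`f` is continuous on the closed unit ball, and restricts to a homeomorphism
(i.e. an embedding) of the open unit ball onto `e`. -/
def IsCellMap {X : Type*} [TopologicalSpace X] {n : ℕ}
    (f : EuclideanSpace ℝ (Fin n) → X) (e : Set X) : Prop :=
  ContinuousOn f (Metric.closedBall 0 1) ∧
  Topology.IsEmbedding ((Metric.ball (0 : EuclideanSpace ℝ (Fin n)) 1).restrict f) ∧
  f '' Metric.ball 0 1 = e

/-- `e` is an open cell of dimension `n` in `X`. -/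
def IsOpenCell {X : Type*} [TopologicalSpace X] (e : Set X) (n : ℕ) : Prop :=
  ∃ f : EuclideanSpace ℝ (Fin n) → X, IsCellMap f e

/-- The Stiefel manifold of inner-product-preserving linear maps `𝕜ⁿ → N`,
topologized as a subspace of the normed space of continuous linear maps. -/
abbrev Stiefel (𝕜 : Type*) [RCLike 𝕜] (n : ℕ) (N : Type*) [NormedAddCommGroup N]
    [InnerProductSpace 𝕜 N] : Type _ :=
  { u : EuclideanSpace 𝕜 (Fin n) →L[𝕜] N // ∀ x y, (inner 𝕜 (u x) (u y) : 𝕜) = inner 𝕜 x y }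

variable (𝕜 : Type*) [RCLike 𝕜]

/-- `E_k`: the span of the first `k+1` standard basis vectors (`0`-based index `k`). -/
def Ek (n : ℕ) (k : Fin n) : Submodule 𝕜 (EuclideanSpace 𝕜 (Fin n)) :=
  Submodule.span 𝕜 {x | ∃ i : Fin n, i ≤ k ∧ x = EuclideanSpace.single i (1 : 𝕜)}

/-- The Schubert cell `V_σ(n,N)` in the Stiefel manifold, relative to the orthonormal
basis `b` of `N`. -/
def VCell {n m : ℕ} {N : Type*} [NormedAddCommGroup N] [InnerProductSpace 𝕜 N]
    (b : OrthonormalBasis (Fin m) 𝕜 N) (σ : Fin n → Fin m) : Set (Stiefel 𝕜 n N) :=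
  { u | ∀ k : Fin n,
      (∀ x ∈ Ek 𝕜 n k, u.1 x ∈ Submodule.span 𝕜 (⇑b '' {j : Fin m | j ≤ σ k})) ∧
      ∃ r : ℝ, 0 < r ∧ (inner 𝕜 (u.1 (EuclideanSpace.single k (1 : 𝕜))) (b (σ k)) : 𝕜) = (r : 𝕜) }

/-- The dimension `d(σ) = Σₖ (σ(k) - k)` of an elementary Schubert symbol. -/
def dSigma {n m : ℕ} (σ : Fin n → Fin m) : ℕ := ∑ k : Fin n, ((σ k : ℕ) - (k : ℕ))

/-- The equivalence relation on `V(n,H)` identifying maps with the same image. -/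
def grassmannSetoid (n : ℕ) (H : Type*) [NormedAddCommGroup H] [InnerProductSpace 𝕜 H] :
    Setoid (Stiefel 𝕜 n H) :=
  ⟨fun u v => LinearMap.range (u.1 : EuclideanSpace 𝕜 (Fin n) →ₗ[𝕜] H) = LinearMap.range (v.1 : EuclideanSpace 𝕜 (Fin n) →ₗ[𝕜] H),
   ⟨fun _ => rfl, Eq.symm, Eq.trans⟩⟩

/-- The Grassmann manifold `G(n,H)` with the quotient topology. -/
abbrev Grassmann (n : ℕ) (H : Type*) [NormedAddCommGroup H] [InnerProductSpace 𝕜 H] : Type _ :=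
  Quotient (grassmannSetoid 𝕜 n H)

/-- A point of `G(n,H)` as an `n`-dimensional subspace of `H`. -/
def Grassmann.rangeOf {n : ℕ} {H : Type*} [NormedAddCommGroup H] [InnerProductSpace 𝕜 H] :
    Grassmann 𝕜 n H → Submodule 𝕜 H :=
  Quotient.lift (fun u => LinearMap.range u.1.toLinearMap) (fun _ _ h => h)

/-- The (1-based) Schubert symbol `σ_X(k) = min { i : dim (X ∩ F i) ≥ k }` of a
subspace `X` relative to a flag `F`. -/
def schubertSigma {K W : Type*} [Ring K] [AddCommGroup W] [Module K W]
    (X : Submodule K W) (F : ℕ → Submodule K W) (k : ℕ) : ℕ :=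
  sInf {i : ℕ | k ≤ Module.finrank K ↥(X ⊓ F i)}

/-- The complete flag associated to an (ordered) orthonormal basis:
`basisFlag b i = span(b₁, …, b_i)` (1-based `i`). -/
def basisFlag {m : ℕ} {N : Type*} [NormedAddCommGroup N] [InnerProductSpace 𝕜 N]
    (b : OrthonormalBasis (Fin m) 𝕜 N) (i : ℕ) : Submodule 𝕜 N :=
  Submodule.span 𝕜 (⇑b '' {j : Fin m | (j : ℕ) < i})

/-- The Schubert cell `G_σ(n,H)` inside the Grassmannian of `n`-dimensional
subspaces of `H`, viewed as a set of submodules. -/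
def GCellSub {n m : ℕ} {H : Type*} [NormedAddCommGroup H] [InnerProductSpace 𝕜 H]
    (b : OrthonormalBasis (Fin m) 𝕜 H) (σ : Fin n → Fin m) : Set (Submodule 𝕜 H) :=
  { X | Module.finrank 𝕜 ↥X = n ∧
        ∀ k : Fin n, schubertSigma X (basisFlag 𝕜 b) ((k : ℕ) + 1) = (σ k : ℕ) + 1 }

/-- The Schubert cell `G_σ(n,H)` as a subset of the Grassmann manifold. -/
def GCell {n m : ℕ} {H : Type*} [NormedAddCommGroup H] [InnerProductSpace 𝕜 H]
    (b : OrthonormalBasis (Fin m) 𝕜 H) (σ : Fin n → Fin m) : Set (Grassmann 𝕜 n H) :=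
  { x | ∀ k : Fin n,
      schubertSigma (Grassmann.rangeOf 𝕜 x) (basisFlag 𝕜 b) ((k : ℕ) + 1) = (σ k : ℕ) + 1 }

/-- Composition of inner-product-preserving maps. -/
def scomp {n q : ℕ} {N : Type*} [NormedAddCommGroup N] [InnerProductSpace 𝕜 N]
    (v : Stiefel 𝕜 q N) (u : Stiefel 𝕜 n (EuclideanSpace 𝕜 (Fin q))) : Stiefel 𝕜 n N :=
  ⟨v.1.comp u.1, fun x y => by
    simp only [ContinuousLinearMap.comp_apply]
    rw [v.2, u.2]⟩

/-- The identity as an inner-product-preserving map. -/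
def sid (n : ℕ) : Stiefel 𝕜 n (EuclideanSpace 𝕜 (Fin n)) :=
  ⟨ContinuousLinearMap.id 𝕜 _, fun _ _ => rfl⟩


section Chains

variable (𝕜 : Type*) [RCLike 𝕜]

/-- Iterated composition `u_{j-1} ∘ ⋯ ∘ u_1 ∘ u_0` of a chain of
inner-product-preserving maps (`0`-based). -/
def chainComp (m : ℕ → ℕ)
    (u : ∀ i : ℕ, Stiefel 𝕜 (m i) (EuclideanSpace 𝕜 (Fin (m (i+1))))) :
    (j : ℕ) → Stiefel 𝕜 (m 0) (EuclideanSpace 𝕜 (Fin (m j)))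
  | 0 => sid 𝕜 (m 0)
  | (j+1) => scomp 𝕜 (u j) (chainComp m u j)

/-- Iterated composition `τ_{j-1} ∘ ⋯ ∘ τ_1 ∘ τ_0` of a chain of Schubert symbols. -/
def symbComp (m : ℕ → ℕ) (τ : ∀ i : ℕ, Fin (m i) → Fin (m (i+1))) :
    (j : ℕ) → Fin (m 0) → Fin (m j)
  | 0 => id
  | (j+1) => τ j ∘ symbComp m τ j

end Chains

section Flags

variable (𝕜 : Type*) [RCLike 𝕜]

/-- The generalized Stiefel manifold `V(n₁,…,n_q,H)` (with `q = Q+1`,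
`nn k = n_{k+1}` 0-based): tuples of isometric embeddings with nested images. -/
abbrev FlagStiefel (nn : ℕ → ℕ) (Q : ℕ) (H : Type*) [NormedAddCommGroup H]
    [InnerProductSpace 𝕜 H] : Type _ :=
  { v : ∀ k : Fin (Q+1), Stiefel 𝕜 (nn k.1) H //
      ∀ k l : Fin (Q+1), k ≤ l → LinearMap.range (v k).1.toLinearMap ≤ LinearMap.range (v l).1.toLinearMap }

/-- A general Schubert symbol of type `(n₁,…,n_q, n)` (with `q = Q+1`,
`nn k = n_{k+1}` 0-based and `nn (Q+1) = n`). -/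
abbrev SymbolFamily (nn : ℕ → ℕ) (Q : ℕ) : Type _ :=
  ∀ k : Fin (Q+1), Fin (nn k.1) → Fin (nn (k.1+1))

/-- The dimension `d(σ) = Σ_k Σ_i (σ_k(i) − i)` of a general Schubert symbol. -/
def dGen {nn : ℕ → ℕ} {Q : ℕ} (σ : SymbolFamily nn Q) : ℕ :=
  ∑ k : Fin (Q+1), ∑ i : Fin (nn k.1), ((σ k i : ℕ) - (i : ℕ))

/-- The cell `V_σ(n₁,…,n_q,H)`: the image under the composition homeomorphism `ψ`
of the product of the cells `V_{σ_k}(n_k, n_{k+1})` and `V_{σ_q}(n_q, H)`. -/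
def GenVCell (nn : ℕ → ℕ) (Q : ℕ) {H : Type*} [NormedAddCommGroup H]
    [InnerProductSpace 𝕜 H] (b : OrthonormalBasis (Fin (nn (Q+1))) 𝕜 H)
    (σ : SymbolFamily nn Q) : Set (FlagStiefel 𝕜 nn Q H) :=
  { v | v.1 (Fin.last Q) ∈ VCell 𝕜 b (σ (Fin.last Q)) ∧
      ∃ u : ∀ k : ℕ, Stiefel 𝕜 (nn k) (EuclideanSpace 𝕜 (Fin (nn (k+1)))),
        (∀ (k : ℕ) (h : k < Q),
            u k ∈ VCell 𝕜 (EuclideanSpace.basisFun (Fin (nn (k+1))) 𝕜)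
              (σ ⟨k, Nat.lt_succ_of_lt h⟩)) ∧
        ∀ (k : ℕ) (h : k < Q),
          v.1 ⟨k, Nat.lt_succ_of_lt h⟩ = scomp 𝕜 (v.1 ⟨k+1, Nat.succ_lt_succ h⟩) (u k) }

/-- The flag manifold `G(n₁,…,n_q,H)` as a subspace of the product of Grassmannians. -/
abbrev FlagManifold (nn : ℕ → ℕ) (Q : ℕ) (H : Type*) [NormedAddCommGroup H]
    [InnerProductSpace 𝕜 H] : Type _ :=
  { x : ∀ k : Fin (Q+1), Grassmann 𝕜 (nn k.1) H //
      ∀ k l : Fin (Q+1), k ≤ l → Grassmann.rangeOf 𝕜 (x k) ≤ Grassmann.rangeOf 𝕜 (x l) }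

/-- The quotient map `p(n₁,…,n_q,H) : V(n₁,…,n_q,H) → G(n₁,…,n_q,H)`. -/
def flagQuot (nn : ℕ → ℕ) (Q : ℕ) {H : Type*} [NormedAddCommGroup H]
    [InnerProductSpace 𝕜 H] (v : FlagStiefel 𝕜 nn Q H) : FlagManifold 𝕜 nn Q H :=
  ⟨fun k => Quotient.mk (grassmannSetoid 𝕜 (nn k.1) H) (v.1 k), fun k l h => v.2 k l h⟩

end Flags

section Induced

variable {K W : Type*} [Ring K] [AddCommGroup W] [Module K W]

/-- Iterated induced flags: `indFlag Q F0 Xn 0 = F0` is the complete flag on the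
ambient space, and `indFlag Q F0 Xn (j+1)` is the complete flag induced on
`Xn (Q-j)` by the flag `indFlag Q F0 Xn j` on the next space. -/
def indFlag (Q : ℕ) (F0 : ℕ → Submodule K W) (Xn : ℕ → Submodule K W) :
    ℕ → ℕ → Submodule K W
  | 0 => F0
  | (j+1) => fun i =>
      Xn (Q - j) ⊓ indFlag Q F0 Xn j (schubertSigma (Xn (Q - j)) (indFlag Q F0 Xn j) i)

/-- The `k`-th component of the Schubert symbol of the flag `Xn`: the Schubert symbol of
`Xn k` inside the completely flagged space `Xn (k+1)` (the ambient space when `k = Q`). -/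
def flagSymbol (Q : ℕ) (F0 : ℕ → Submodule K W) (Xn : ℕ → Submodule K W) (k i : ℕ) : ℕ :=
  schubertSigma (Xn k) (indFlag Q F0 Xn (Q - k)) i

end Induced

section FlagCells

variable (𝕜 : Type*) [RCLike 𝕜]

/-- A tuple of submodules, extended by `⊤` (the ambient space) beyond index `Q`. -/
def tupleExt {Q : ℕ} {H : Type*} [NormedAddCommGroup H] [InnerProductSpace 𝕜 H]
    (Xt : ∀ _ : Fin (Q+1), Submodule 𝕜 H) (j : ℕ) : Submodule 𝕜 H :=
  if h : j < Q + 1 then Xt ⟨j, h⟩ else ⊤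

/-- The set `G(n₁,…,n_q,H)` of flags, as tuples of submodules. -/
def GFlagSet (nn : ℕ → ℕ) (Q : ℕ) (H : Type*) [NormedAddCommGroup H]
    [InnerProductSpace 𝕜 H] : Set (∀ _ : Fin (Q+1), Submodule 𝕜 H) :=
  { Xt | (∀ k : Fin (Q+1), Module.finrank 𝕜 ↥(Xt k) = nn k.1) ∧
      ∀ k l : Fin (Q+1), k ≤ l → Xt k ≤ Xt l }

/-- The Schubert cell `G_σ(n₁,…,n_q,H)`, as a set of tuples of submodules. -/
def GFlagCellSub (nn : ℕ → ℕ) (Q : ℕ) {H : Type*} [NormedAddCommGroup H]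
    [InnerProductSpace 𝕜 H] (b : OrthonormalBasis (Fin (nn (Q+1))) 𝕜 H)
    (σ : SymbolFamily nn Q) : Set (∀ _ : Fin (Q+1), Submodule 𝕜 H) :=
  { Xt | Xt ∈ GFlagSet 𝕜 nn Q H ∧
      ∀ (k : Fin (Q+1)) (i : Fin (nn k.1)),
        flagSymbol Q (basisFlag 𝕜 b) (tupleExt 𝕜 Xt) k.1 (i.1+1) = (σ k i : ℕ) + 1 }

/-- The Schubert cell `G_σ(n₁,…,n_q,H)` as a subset of the flag manifold. -/
def GFlagCellQ (nn : ℕ → ℕ) (Q : ℕ) {H : Type*} [NormedAddCommGroup H]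
    [InnerProductSpace 𝕜 H] (b : OrthonormalBasis (Fin (nn (Q+1))) 𝕜 H)
    (σ : SymbolFamily nn Q) : Set (FlagManifold 𝕜 nn Q H) :=
  { x | ∀ (k : Fin (Q+1)) (i : Fin (nn k.1)),
      flagSymbol Q (basisFlag 𝕜 b)
        (tupleExt 𝕜 (fun l => Grassmann.rangeOf 𝕜 (x.1 l))) k.1 (i.1+1) = (σ k i : ℕ) + 1 }

end FlagCells

/-!
A point `u` of a Schubert cell `V_τ` is determined by its image among all isometries `u'`
satisfying the closed conditions (columns `u'(e_k) ∈ span(b_j | j ≤ τ k)`, pivots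
`⟪u'(e_k), b_{τ k}⟫` real and `≥ 0`). By induction on `k`: `u'(e_k)` lies in `Im u` and in the
flag space at `τ k`, so in the span of the columns `u(e_j)`, `j ≤ k`, (the pivots of `u` are
nonzero), and it is orthogonal to the earlier columns, which agree; hence it is a unimodular
multiple of `u(e_k)` with nonnegative pivot, i.e. equal to it.

For flags, `v ↦ (v_{k+1}^* ∘ v_k)_k` inverts the composition map `ψ` continuously, so the closed
conditions on these components hold on the closure of `V_σ`, and rigidity propagates from
`v_q` down to `v_1`. Hence a point of the closure with the same images as a point of `V_σ`
equals it, which gives both injectivity and the disjointness.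
-/

open scoped ComplexOrder

section StiefelCells

variable {𝕜 : Type*} [RCLike 𝕜] {n m : ℕ} {N : Type*} [NormedAddCommGroup N]
  [InnerProductSpace 𝕜 N]

def basisFlagLE (b : OrthonormalBasis (Fin m) 𝕜 N) (j : Fin m) : Submodule 𝕜 N :=
  Submodule.span 𝕜 (⇑b '' {i : Fin m | i ≤ j})

lemma inner_eq_zero_of_mem_basisFlagLE (b : OrthonormalBasis (Fin m) 𝕜 N) {j l : Fin m}
    (hjl : j < l) {x : N} (hx : x ∈ basisFlagLE b j) : ⟪x, b l⟫_𝕜 = 0 := by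
  have hle : basisFlagLE b j ≤ (𝕜 ∙ b l)ᗮ := by
    refine Submodule.span_le.2 ?_
    rintro _ ⟨i, hi, rfl⟩
    exact Submodule.mem_orthogonal_singleton_iff_inner_left.2
      (b.orthonormal.2 (hi.trans_lt hjl).ne)
  exact Submodule.mem_orthogonal_singleton_iff_inner_left.1 (hle hx)

namespace Stiefel

def col (u : Stiefel 𝕜 n N) (k : Fin n) : N :=
  u.1 (EuclideanSpace.single k 1)

lemma orthonormal_col (u : Stiefel 𝕜 n N) : Orthonormal 𝕜 u.col := by
  rw [orthonormal_iff_ite]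
  intro i j
  simp [col, u.2, EuclideanSpace.inner_single_left]

lemma apply_eq_sum_col (u : Stiefel 𝕜 n N) (y : EuclideanSpace 𝕜 (Fin n)) :
    u.1 y = ∑ i, y i • u.col i := by
  conv_lhs => rw [← (EuclideanSpace.basisFun (Fin n) 𝕜).sum_repr y]
  simp [col, map_sum, map_smul]

lemma inner_col_apply (u : Stiefel 𝕜 n N) (k : Fin n) (y : EuclideanSpace 𝕜 (Fin n)) :
    ⟪u.col k, u.1 y⟫_𝕜 = y k := by
  simp [col, u.2, EuclideanSpace.inner_single_left]

end Stiefel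

-- `0 ≤ z` is the `ComplexOrder`: `z` is real and nonnegative.
def closedVCell (b : OrthonormalBasis (Fin m) 𝕜 N) (τ : Fin n → Fin m) :
    Set (Stiefel 𝕜 n N) :=
  { u | ∀ k, u.col k ∈ basisFlagLE b (τ k) ∧ 0 ≤ ⟪u.col k, b (τ k)⟫_𝕜 }

lemma col_mem_basisFlagLE_of_mem_VCell {b : OrthonormalBasis (Fin m) 𝕜 N} {τ : Fin n → Fin m}
    {u : Stiefel 𝕜 n N} (hu : u ∈ VCell 𝕜 b τ) (k : Fin n) : u.col k ∈ basisFlagLE b (τ k) :=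
  (hu k).1 _ (Submodule.subset_span ⟨k, le_rfl, rfl⟩)

lemma inner_col_pos_of_mem_VCell {b : OrthonormalBasis (Fin m) 𝕜 N} {τ : Fin n → Fin m}
    {u : Stiefel 𝕜 n N} (hu : u ∈ VCell 𝕜 b τ) (k : Fin n) : 0 < ⟪u.col k, b (τ k)⟫_𝕜 := by
  obtain ⟨r, hr, hr'⟩ := (hu k).2
  exact RCLike.pos_iff_exists_ofReal.2 ⟨r, hr, hr'.symm⟩

lemma VCell_subset_closedVCell (b : OrthonormalBasis (Fin m) 𝕜 N) (τ : Fin n → Fin m) :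
    VCell 𝕜 b τ ⊆ closedVCell b τ :=
  fun _ hu k => ⟨col_mem_basisFlagLE_of_mem_VCell hu k, (inner_col_pos_of_mem_VCell hu k).le⟩

lemma isClosed_closedVCell (b : OrthonormalBasis (Fin m) 𝕜 N) (τ : Fin n → Fin m) :
    IsClosed (closedVCell b τ) := by
  have hcol (k : Fin n) : Continuous fun u : Stiefel 𝕜 n N => u.col k :=
    continuous_subtype_val.clm_apply continuous_const
  have hflag (k : Fin n) : IsClosed (basisFlagLE b (τ k) : Set N) :=
    haveI : FiniteDimensional 𝕜 (basisFlagLE b (τ k)) :=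
      FiniteDimensional.span_of_finite 𝕜 ((Set.toFinite _).image b)
    Submodule.closed_of_finiteDimensional _
  simp only [closedVCell, Set.ofPred_forall, Set.ofPred_and]
  exact isClosed_iInter fun k => ((hflag k).preimage (hcol k)).inter
    (isClosed_le continuous_const ((hcol k).inner continuous_const))

lemma coord_eq_zero_of_apply_mem_basisFlagLE {b : OrthonormalBasis (Fin m) 𝕜 N}
    {τ : Fin n → Fin m} (hτ : StrictMono τ) {u : Stiefel 𝕜 n N} (hu : u ∈ VCell 𝕜 b τ)
    {y : EuclideanSpace 𝕜 (Fin n)} {k : Fin n} (hy : u.1 y ∈ basisFlagLE b (τ k)) {i : Fin n}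
    (hki : k < i) : y i = 0 := by
  by_contra hyi
  -- Pair `u y` with the pivot `b (τ M)` of the last nonzero coordinate `M` of `y`.
  set s := Finset.univ.filter fun j => y j ≠ 0
  have hs : s.Nonempty := ⟨i, by simpa [s] using hyi⟩
  set M := s.max' hs
  have hyM : y M ≠ 0 := (Finset.mem_filter.1 (s.max'_mem hs)).2
  have hkM : k < M := hki.trans_le (s.le_max' i (by simpa [s] using hyi))
  have hinner : ⟪u.1 y, b (τ M)⟫_𝕜 = starRingEnd 𝕜 (y M) * ⟪u.col M, b (τ M)⟫_𝕜 := by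
    rw [u.apply_eq_sum_col, sum_inner, Finset.sum_eq_single M, inner_smul_left]
    · intro j _ hjM
      rcases hjM.lt_or_gt with hjM | hMj
      · rw [inner_smul_left, inner_eq_zero_of_mem_basisFlagLE b (hτ hjM)
          (col_mem_basisFlagLE_of_mem_VCell hu j), mul_zero]
      · have hyj : y j = 0 := by
          by_contra h
          exact (s.le_max' j (by simpa [s] using h)).not_gt hMj
        rw [hyj, zero_smul, inner_zero_left]
    · simp
  rw [inner_eq_zero_of_mem_basisFlagLE b (hτ hkM) hy, eq_comm] at hinner
  exact hyM (by simpa [(inner_col_pos_of_mem_VCell hu M).ne'] using hinner)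

lemma RCLike.eq_one_of_nonneg_of_norm_eq_one {z : 𝕜} (hz : 0 ≤ z) (h : ‖z‖ = 1) : z = 1 := by
  rw [← RCLike.norm_of_nonneg' hz, h, RCLike.ofReal_one]

lemma col_eq_of_range_eq {b : OrthonormalBasis (Fin m) 𝕜 N} {τ : Fin n → Fin m}
    (hτ : StrictMono τ) {u u' : Stiefel 𝕜 n N} (hu : u ∈ closedVCell b τ)
    (hu' : u' ∈ VCell 𝕜 b τ)
    (hr : LinearMap.range u.1.toLinearMap = LinearMap.range u'.1.toLinearMap)
    (k : Fin n) : u.col k = u'.col k := by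
  induction k using WellFoundedLT.induction with
  | ind k ih =>
    obtain ⟨y, hy⟩ : u.col k ∈ LinearMap.range u'.1.toLinearMap := hr ▸ ⟨_, rfl⟩
    change u'.1 y = u.col k at hy
    have hcoord : ∀ j ≠ k, y j = 0 := by
      intro j hjk
      rcases hjk.lt_or_gt with hjk | hkj
      · rw [← u'.inner_col_apply, hy, ← ih j hjk, u.orthonormal_col.2 hjk.ne]
      · exact coord_eq_zero_of_apply_mem_basisFlagLE hτ hu' (hy ▸ (hu k).1) hkj
    have hcol : u.col k = y k • u'.col k := by
      rw [← hy, u'.apply_eq_sum_col, Finset.sum_eq_single k (fun j _ hjk => by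
        rw [hcoord j hjk, zero_smul]) (by simp)]
    have hnorm : ‖y k‖ = 1 := by
      simpa [hcol, norm_smul, u'.orthonormal_col.1 k] using u.orthonormal_col.1 k
    have hnonneg : 0 ≤ starRingEnd 𝕜 (y k) := by
      have hpiv := (hu k).2
      rw [hcol, inner_smul_left] at hpiv
      have hpiv' := inner_col_pos_of_mem_VCell hu' k
      simpa [mul_assoc, hpiv'.ne'] using mul_nonneg hpiv (inv_nonneg.2 hpiv'.le)
    have hconj : starRingEnd 𝕜 (y k) = 1 :=
      RCLike.eq_one_of_nonneg_of_norm_eq_one hnonneg (by simpa using hnorm)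
    rw [hcol, show y k = 1 by simpa using congrArg (starRingEnd 𝕜) hconj, one_smul]

lemma eq_of_range_eq_of_mem_VCell {b : OrthonormalBasis (Fin m) 𝕜 N} {τ : Fin n → Fin m}
    (hτ : StrictMono τ) {u u' : Stiefel 𝕜 n N} (hu : u ∈ closedVCell b τ)
    (hu' : u' ∈ VCell 𝕜 b τ)
    (hr : LinearMap.range u.1.toLinearMap = LinearMap.range u'.1.toLinearMap) : u = u' := by
  ext y
  simp only [u.apply_eq_sum_col, u'.apply_eq_sum_col, col_eq_of_range_eq hτ hu hu' hr]

end StiefelCells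

namespace Stiefel

variable {𝕜 : Type*} [RCLike 𝕜] {p q : ℕ} {N : Type*} [NormedAddCommGroup N]
  [InnerProductSpace 𝕜 N] [CompleteSpace N]

lemma adjoint_apply_apply (w : Stiefel 𝕜 q N) (x : EuclideanSpace 𝕜 (Fin q)) :
    ContinuousLinearMap.adjoint w.1 (w.1 x) = x :=
  congr($((w.1.inner_map_map_iff_adjoint_comp_self).1 w.2) x)

lemma comp_adjoint_comp_of_range_le (w : Stiefel 𝕜 q N) (x : Stiefel 𝕜 p N)
    (h : LinearMap.range x.1.toLinearMap ≤ LinearMap.range w.1.toLinearMap) :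
    w.1 ∘L ContinuousLinearMap.adjoint w.1 ∘L x.1 = x.1 := by
  ext a
  obtain ⟨c, hc⟩ := h ⟨a, rfl⟩
  change w.1 c = x.1 a at hc
  simp [← hc, adjoint_apply_apply]

/-- `x` written in the coordinates of `w`, i.e. `w⁻¹ ∘ x` where `Im x ⊆ Im w`. -/
def factor (w : Stiefel 𝕜 q N) (x : Stiefel 𝕜 p N)
    (h : LinearMap.range x.1.toLinearMap ≤ LinearMap.range w.1.toLinearMap) :
    Stiefel 𝕜 p (EuclideanSpace 𝕜 (Fin q)) :=
  ⟨ContinuousLinearMap.adjoint w.1 ∘L x.1, fun a a' => by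
    rw [← w.2, ← ContinuousLinearMap.comp_apply w.1, ← ContinuousLinearMap.comp_apply w.1,
      comp_adjoint_comp_of_range_le w x h, x.2]⟩

lemma scomp_factor (w : Stiefel 𝕜 q N) (x : Stiefel 𝕜 p N)
    (h : LinearMap.range x.1.toLinearMap ≤ LinearMap.range w.1.toLinearMap) :
    scomp 𝕜 w (w.factor x h) = x :=
  Subtype.ext (comp_adjoint_comp_of_range_le w x h)

lemma factor_scomp (w : Stiefel 𝕜 q N) (u : Stiefel 𝕜 p (EuclideanSpace 𝕜 (Fin q)))
    (h : LinearMap.range (scomp 𝕜 w u).1.toLinearMap ≤ LinearMap.range w.1.toLinearMap) :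
    w.factor (scomp 𝕜 w u) h = u :=
  Subtype.ext (ContinuousLinearMap.ext fun a => adjoint_apply_apply w (u.1 a))

lemma range_factor (w : Stiefel 𝕜 q N) (x : Stiefel 𝕜 p N)
    (h : LinearMap.range x.1.toLinearMap ≤ LinearMap.range w.1.toLinearMap) :
    LinearMap.range (w.factor x h).1.toLinearMap =
      (LinearMap.range x.1.toLinearMap).map (ContinuousLinearMap.adjoint w.1).toLinearMap :=
  LinearMap.range_comp _ _

end Stiefel

namespace FlagStiefel

variable {𝕜 : Type*} [RCLike 𝕜] {nn : ℕ → ℕ} {Q : ℕ} {H : Type*} [NormedAddCommGroup H]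
  [InnerProductSpace 𝕜 H] [CompleteSpace H]

/-- The `k`-th component `u_k` of `ψ⁻¹ v`, i.e. `v_k` in the coordinates of `v_{k+1}`. -/
def link (v : FlagStiefel 𝕜 nn Q H) (k : ℕ) (hk : k < Q) :
    Stiefel 𝕜 (nn k) (EuclideanSpace 𝕜 (Fin (nn (k + 1)))) :=
  (v.1 ⟨k + 1, by omega⟩).factor (v.1 ⟨k, by omega⟩) (v.2 _ _ (Fin.mk_le_mk.2 k.le_succ))

lemma scomp_link (v : FlagStiefel 𝕜 nn Q H) (k : ℕ) (hk : k < Q) :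
    scomp 𝕜 (v.1 ⟨k + 1, by omega⟩) (v.link k hk) = v.1 ⟨k, by omega⟩ :=
  Stiefel.scomp_factor _ _ _

lemma link_eq_of_eq_scomp (v : FlagStiefel 𝕜 nn Q H) (k : ℕ) (hk : k < Q)
    (u : Stiefel 𝕜 (nn k) (EuclideanSpace 𝕜 (Fin (nn (k + 1)))))
    (h : v.1 ⟨k, by omega⟩ = scomp 𝕜 (v.1 ⟨k + 1, by omega⟩) u) : v.link k hk = u := by
  simp only [link, h]
  exact Stiefel.factor_scomp _ _ _

lemma continuous_link (k : ℕ) (hk : k < Q) :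
    Continuous fun v : FlagStiefel 𝕜 nn Q H => v.link k hk := by
  have hcomp (j : Fin (Q + 1)) : Continuous fun v : FlagStiefel 𝕜 nn Q H => (v.1 j).1 :=
    continuous_subtype_val.comp ((continuous_apply j).comp continuous_subtype_val)
  exact ((ContinuousLinearMap.adjoint.continuous.comp (hcomp ⟨k + 1, by omega⟩)).clm_comp
    (hcomp ⟨k, by omega⟩)).subtype_mk _

end FlagStiefel

section GenCells

variable {𝕜 : Type*} [RCLike 𝕜] {nn : ℕ → ℕ} {Q : ℕ} {H : Type*} [NormedAddCommGroup H]
  [InnerProductSpace 𝕜 H] [CompleteSpace H]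

def closedGenVCell (b : OrthonormalBasis (Fin (nn (Q + 1))) 𝕜 H) (σ : SymbolFamily nn Q) :
    Set (FlagStiefel 𝕜 nn Q H) :=
  { v | v.1 (Fin.last Q) ∈ closedVCell b (σ (Fin.last Q)) ∧
      ∀ (k : ℕ) (hk : k < Q), v.link k hk ∈
        closedVCell (EuclideanSpace.basisFun (Fin (nn (k + 1))) 𝕜) (σ ⟨k, by omega⟩) }

lemma genVCell_subset_closedGenVCell (b : OrthonormalBasis (Fin (nn (Q + 1))) 𝕜 H)
    (σ : SymbolFamily nn Q) : GenVCell 𝕜 nn Q b σ ⊆ closedGenVCell b σ := by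
  rintro v ⟨hlast, u, hu, hcomp⟩
  refine ⟨VCell_subset_closedVCell _ _ hlast, fun k hk => ?_⟩
  rw [v.link_eq_of_eq_scomp k hk (u k) (hcomp k hk)]
  exact VCell_subset_closedVCell _ _ (hu k hk)

lemma isClosed_closedGenVCell (b : OrthonormalBasis (Fin (nn (Q + 1))) 𝕜 H)
    (σ : SymbolFamily nn Q) : IsClosed (closedGenVCell b σ) := by
  simp only [closedGenVCell, Set.ofPred_and, Set.ofPred_forall]
  refine ((isClosed_closedVCell _ _).preimage ?_).inter
    (isClosed_iInter fun k => isClosed_iInter fun hk =>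
      (isClosed_closedVCell _ _).preimage (FlagStiefel.continuous_link k hk))
  exact (continuous_apply _).comp continuous_subtype_val

lemma eq_of_range_eq_of_mem_genVCell {b : OrthonormalBasis (Fin (nn (Q + 1))) 𝕜 H}
    {σ : SymbolFamily nn Q} (hσ : ∀ k, StrictMono (σ k)) {v v' : FlagStiefel 𝕜 nn Q H}
    (hv : v ∈ closedGenVCell b σ) (hv' : v' ∈ GenVCell 𝕜 nn Q b σ)
    (hr : ∀ k, LinearMap.range (v.1 k).1.toLinearMap = LinearMap.range (v'.1 k).1.toLinearMap) :
    v = v' := by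
  obtain ⟨hlast', u', hu', hcomp'⟩ := hv'
  refine Subtype.ext (funext fun k => ?_)
  induction k using Fin.reverseInduction with
  | last => exact eq_of_range_eq_of_mem_VCell (hσ _) hv.1 hlast' (hr _)
  | cast i ih =>
    change v.1 ⟨i + 1, by omega⟩ = v'.1 ⟨i + 1, by omega⟩ at ih
    have hlink' : v'.link i i.2 = u' i := v'.link_eq_of_eq_scomp i i.2 _ (hcomp' i i.2)
    have hlink : v.link i i.2 = u' i := by
      refine eq_of_range_eq_of_mem_VCell (hσ _) (hv.2 i i.2) (hu' i i.2) ?_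
      rw [← hlink', FlagStiefel.link, FlagStiefel.link, Stiefel.range_factor,
        Stiefel.range_factor, hr, ih]
    change v.1 ⟨i, by omega⟩ = v'.1 ⟨i, by omega⟩
    rw [← v.scomp_link i i.2, hlink, ih, hcomp' i i.2]

end GenCells

theorem genVCell_injOn_and_disjoint_images_general
    (𝕜 : Type*) [RCLike 𝕜] (H : Type*) [NormedAddCommGroup H] [InnerProductSpace 𝕜 H]
    [FiniteDimensional 𝕜 H] (nn : ℕ → ℕ) (Q : ℕ)
    (b : OrthonormalBasis (Fin (nn (Q + 1))) 𝕜 H)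
    (σ : SymbolFamily nn Q) (hσ : ∀ k, StrictMono (σ k)) :
    Set.InjOn (fun v : FlagStiefel 𝕜 nn Q H => fun k : Fin (Q + 1) => LinearMap.range (v.1 k).1.toLinearMap)
      (GenVCell 𝕜 nn Q b σ) ∧
    ((fun v : FlagStiefel 𝕜 nn Q H => fun k : Fin (Q + 1) => LinearMap.range (v.1 k).1.toLinearMap) ''
        GenVCell 𝕜 nn Q b σ) ∩
      ((fun v : FlagStiefel 𝕜 nn Q H => fun k : Fin (Q + 1) => LinearMap.range (v.1 k).1.toLinearMap) ''
        (closure (GenVCell 𝕜 nn Q b σ) \ GenVCell 𝕜 nn Q b σ)) = ∅ := by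
  have : CompleteSpace H := FiniteDimensional.complete 𝕜 H
  have hclosure : closure (GenVCell 𝕜 nn Q b σ) ⊆ closedGenVCell b σ :=
    closure_minimal (genVCell_subset_closedGenVCell b σ) (isClosed_closedGenVCell b σ)
  have hrigid : ∀ v ∈ closure (GenVCell 𝕜 nn Q b σ), ∀ v' ∈ GenVCell 𝕜 nn Q b σ,
      (∀ k, LinearMap.range (v.1 k).1.toLinearMap = LinearMap.range (v'.1 k).1.toLinearMap) →
        v = v' :=
    fun v hv v' hv' hr => eq_of_range_eq_of_mem_genVCell hσ (hclosure hv) hv' hr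
  refine ⟨fun v hv v' hv' h => hrigid v (subset_closure hv) v' hv' (congrFun h), ?_⟩
  rw [Set.eq_empty_iff_forall_notMem]
  rintro _ ⟨⟨v', hv', rfl⟩, v, ⟨hv, hv_not⟩, h⟩
  exact hv_not (hrigid v hv v' hv' (congrFun h) ▸ hv')

/-- Lemma 6.2: the map `p(n₁,…,n_q,H) : (v₁,…,v_q) ↦ (Im v₁,…,Im v_q)` is injective on
`V_σ(n₁,…,n_q,H)`, and the images under it of `V_σ(n₁,…,n_q,H)` and of
`∂V_σ(n₁,…,n_q,H)` are disjoint. -/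
theorem genVCell_injOn_and_disjoint_images
    (𝕜 : Type*) [RCLike 𝕜] (H : Type*) [NormedAddCommGroup H] [InnerProductSpace 𝕜 H]
    [FiniteDimensional 𝕜 H] (nn : ℕ → ℕ) (Q : ℕ)
    (h0 : 0 < nn 0) (hchain : ∀ k ≤ Q, nn k < nn (k + 1))
    (b : OrthonormalBasis (Fin (nn (Q + 1))) 𝕜 H)
    (σ : SymbolFamily nn Q) (hσ : ∀ k, StrictMono (σ k)) :
    Set.InjOn (fun v : FlagStiefel 𝕜 nn Q H => fun k : Fin (Q + 1) => LinearMap.range (v.1 k).1.toLinearMap)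
      (GenVCell 𝕜 nn Q b σ) ∧
    ((fun v : FlagStiefel 𝕜 nn Q H => fun k : Fin (Q + 1) => LinearMap.range (v.1 k).1.toLinearMap) ''
        GenVCell 𝕜 nn Q b σ) ∩
      ((fun v : FlagStiefel 𝕜 nn Q H => fun k : Fin (Q + 1) => LinearMap.range (v.1 k).1.toLinearMap) ''
        (closure (GenVCell 𝕜 nn Q b σ) \ GenVCell 𝕜 nn Q b σ)) = ∅ :=
  genVCell_injOn_and_disjoint_images_general 𝕜 H nn Q b σ hσ
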